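/- arXiv:1809.10123 — 5 statements merged into one kernel-verified Lean document; each statement's English description precedes it below -/
import Mathlib

section
/- Fix real numbers 0 < T* ≤ T, ε > 0 and κ > 0. Let G : [0,T] → ℝ be continuous with 0 ≤ G(t) ≤ κ for all t ∈ [0,T] and G(0) = 1. Let Γ : ℝ → ℝ be continuous and nondecreasing, constant on (−∞, 0] with Γ(0) = 0, let μ_Γ be its Lebesgue–Stieltjes measure, and assume Γ(T*) > 1 + ε. For c > 0 define V_c(t) := ((G(t) + c)/(1 + c)) · exp( ∫_{(0,t]} (G(s) + c)^{−1} dμ_Γ(s) ). Then V_c(0) = 1 and V_c(t) > 0 for all t ∈ [0,T] and all c > 0, and there exists c > 0 (depending only on T*, ε, κ) such that V_c(t) > 1 for every t ∈ [T*, T]. (This is the content of Theorem 4.7, multiplicatively generated strong relative arbitrage, where V_c is the value process of the strategy multiplicatively generated by G^{(c)} = (G + c)/(1 + c).) -/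
/-!
On `[0, t]` the integrand `(G + c)⁻¹` is at least `(κ + c)⁻¹`, so the exponent of `V_c(t)` is at
least `Γ(t) / (κ + c) ≥ (1 + ε) / (κ + c)`, while the prefactor is at least `c / (1 + c)`. With
`e^x ≥ 1 + x` the product exceeds `1` as soon as `κ < c ε`, e.g. for `c = κ / ε + 1`.
-/

open MeasureTheory

section InverseShift

variable {X : Type*} [MeasurableSpace X] [TopologicalSpace X] [OpensMeasurableSpace X]
  {μ : Measure X} {s : Set X} {f : X → ℝ} {c κ : ℝ}

theorem integrableOn_inv_add_const_of_nonneg (hs : MeasurableSet s) (hμs : μ s ≠ ⊤)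
    (hf : ContinuousOn f s) (hf0 : ∀ x ∈ s, 0 ≤ f x) (hc : 0 < c) :
    IntegrableOn (fun x => (f x + c)⁻¹) s μ := by
  have hpos : ∀ x ∈ s, 0 < f x + c := fun x hx => by linarith [hf0 x hx]
  have hcont : ContinuousOn (fun x => (f x + c)⁻¹) s :=
    (hf.add continuousOn_const).inv₀ fun x hx => (hpos x hx).ne'
  have : IsFiniteMeasure (μ.restrict s) := isFiniteMeasure_restrict.mpr hμs
  refine (integrable_const c⁻¹).mono' (hcont.aestronglyMeasurable hs) ?_
  filter_upwards [ae_restrict_mem hs] with x hx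
  rw [Real.norm_of_nonneg (inv_nonneg.mpr (hpos x hx).le)]
  exact inv_anti₀ hc (by linarith [hf0 x hx])

theorem div_add_le_setIntegral_inv_add_const (hs : MeasurableSet s) (hμs : μ s ≠ ⊤)
    (hf : ContinuousOn f s) (hf0 : ∀ x ∈ s, 0 ≤ f x) (hfκ : ∀ x ∈ s, f x ≤ κ) (hc : 0 < c) :
    μ.real s / (κ + c) ≤ ∫ x in s, (f x + c)⁻¹ ∂μ := by
  have hbound : ∀ x ∈ s, (κ + c)⁻¹ ≤ (f x + c)⁻¹ := fun x hx =>
    inv_anti₀ (by linarith [hf0 x hx]) (by linarith [hfκ x hx])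
  simpa [div_eq_inv_mul] using setIntegral_ge_of_const_le_real hs hμs hbound
    (integrableOn_inv_add_const_of_nonneg hs hμs hf hf0 hc)

end InverseShift

theorem one_lt_div_one_add_mul_exp {c κ ε x : ℝ} (hc : 0 < c) (hκ : 0 ≤ κ)
    (hκε : κ < c * ε) (hx : 1 + ε ≤ x) :
    1 < c / (1 + c) * Real.exp (x / (κ + c)) := by
  have hκc : 0 < κ + c := by linarith
  rw [div_mul_eq_mul_div, one_lt_div (by linarith)]
  calc 1 + c < c * (1 + (1 + ε) / (κ + c)) := by
        rw [mul_one_add, mul_div_assoc', ← sub_lt_iff_lt_add', add_sub_cancel_right,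
          lt_div_iff₀ hκc]
        nlinarith
    _ ≤ c * Real.exp (x / (κ + c)) := by
        gcongr
        calc 1 + (1 + ε) / (κ + c) ≤ x / (κ + c) + 1 := by
              rw [add_comm]; gcongr
          _ ≤ Real.exp (x / (κ + c)) := Real.add_one_le_exp _

theorem multiplicatively_generated_strong_relative_arbitrage_general
    (T Tstar ε κ : ℝ) (hTstar : 0 < Tstar)
    (hε : 0 < ε) (hκ : 0 < κ)
    (G : ℝ → ℝ) (hGcont : ContinuousOn G (Set.Icc (0:ℝ) T))
    (hGbdd : ∀ t ∈ Set.Icc (0:ℝ) T, G t ∈ Set.Icc (0:ℝ) κ)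
    (hG0 : G 0 = 1)
    (Γ : ℝ → ℝ) (hΓmono : Monotone Γ)
    (hΓconst : ∀ t : ℝ, t ≤ 0 → Γ t = 0)
    (μΓ : Measure ℝ)
    (hμΓ : ∀ a b : ℝ, a ≤ b → μΓ (Set.Ioc a b) = ENNReal.ofReal (Γ b - Γ a))
    (hΓTstar : Γ Tstar > 1 + ε)
    (V : ℝ → ℝ → ℝ)
    (hV : ∀ c t, V c t =
      ((G t + c) / (1 + c)) *
        Real.exp (∫ s in Set.Ioc (0:ℝ) t, (G s + c)⁻¹ ∂μΓ)) :
    (∀ c > (0:ℝ), V c 0 = 1 ∧ ∀ t ∈ Set.Icc (0:ℝ) T, 0 < V c t) ∧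
      ∃ c > (0:ℝ), ∀ t ∈ Set.Icc Tstar T, 1 < V c t := by
  refine ⟨fun c hc => ⟨?_, fun t ht => ?_⟩, ?_⟩
  · rw [hV, Set.Ioc_self, Measure.restrict_empty, integral_zero_measure, Real.exp_zero, hG0,
      div_self (by positivity), one_mul]
  · rw [hV]
    have := (hGbdd t ht).1
    positivity
  set c := κ / ε + 1
  have hc : 0 < c := by positivity
  have hκε : κ < c * ε := by
    rw [add_mul, div_mul_cancel₀ _ hε.ne', one_mul]; linarith
  refine ⟨c, hc, fun t ht => ?_⟩
  have hsub : Set.Ioc 0 t ⊆ Set.Icc 0 T := fun s hs => ⟨hs.1.le, hs.2.trans ht.2⟩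
  have ht0 : 0 ≤ t := hTstar.le.trans ht.1
  have hΓt : 1 + ε ≤ Γ t := hΓTstar.le.trans (hΓmono ht.1)
  have hμt : μΓ.real (Set.Ioc 0 t) = Γ t := by
    rw [measureReal_def, hμΓ 0 t ht0, hΓconst 0 le_rfl, sub_zero,
      ENNReal.toReal_ofReal (by linarith)]
  have hintegral := div_add_le_setIntegral_inv_add_const (μ := μΓ) measurableSet_Ioc
    (by simp [hμΓ 0 t ht0]) (hGcont.mono hsub) (fun s hs => (hGbdd s (hsub hs)).1)
    (fun s hs => (hGbdd s (hsub hs)).2) hc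
  rw [hμt] at hintegral
  have hGt := (hGbdd t ⟨ht0, ht.2⟩).1
  calc 1 < c / (1 + c) * Real.exp (Γ t / (κ + c)) :=
        one_lt_div_one_add_mul_exp hc hκ.le hκε hΓt
    _ ≤ V c t := by rw [hV]; gcongr; linarith

/-- Theorem 4.7 (multiplicatively generated strong relative arbitrage):
`V_c` is the value process of the strategy multiplicatively generated by
`G^{(c)} = (G + c)/(1 + c)`, where `μΓ` is the Lebesgue–Stieltjes measure of
the nondecreasing continuous Gamma functional `Γ`. -/
theorem multiplicatively_generated_strong_relative_arbitrage
    (T Tstar ε κ : ℝ) (hTstar : 0 < Tstar) (hTstarT : Tstar ≤ T)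
    (hε : 0 < ε) (hκ : 0 < κ)
    (G : ℝ → ℝ) (hGcont : ContinuousOn G (Set.Icc (0:ℝ) T))
    (hGbdd : ∀ t ∈ Set.Icc (0:ℝ) T, G t ∈ Set.Icc (0:ℝ) κ)
    (hG0 : G 0 = 1)
    (Γ : ℝ → ℝ) (hΓcont : Continuous Γ) (hΓmono : Monotone Γ)
    (hΓconst : ∀ t : ℝ, t ≤ 0 → Γ t = 0)
    (μΓ : Measure ℝ)
    (hμΓ : ∀ a b : ℝ, a ≤ b → μΓ (Set.Ioc a b) = ENNReal.ofReal (Γ b - Γ a))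
    (hΓTstar : Γ Tstar > 1 + ε)
    (V : ℝ → ℝ → ℝ)
    (hV : ∀ c t, V c t =
      ((G t + c) / (1 + c)) *
        Real.exp (∫ s in Set.Ioc (0:ℝ) t, (G s + c)⁻¹ ∂μΓ)) :
    (∀ c > (0:ℝ), V c 0 = 1 ∧ ∀ t ∈ Set.Icc (0:ℝ) T, 0 < V c t) ∧
      ∃ c > (0:ℝ), ∀ t ∈ Set.Icc Tstar T, 1 < V c t :=
  multiplicatively_generated_strong_relative_arbitrage_general T Tstar ε κ hTstar hε hκ G hGcont
    hGbdd hG0 Γ hΓmono hΓconst μΓ hμΓ hΓTstar V hV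
end

section
/- Let f : ℝ → ℝ be continuous and T > 0. Let M be the running maximum of f on [0,T], extended constantly outside [0,T], and let μ_M be the Lebesgue–Stieltjes measure of M. Then μ_M( { s ∈ [0,T] : f(s) < M(s) } ) = 0; that is, the measure dM is carried by the set of times at which f attains its running maximum. -/
open MeasureTheory

/-- The running maximum of `f` on `[0, T]`, extended constantly outside `[0, T]`:
`runMax f T t = max_{0 ≤ s ≤ min(max(t,0),T)} f(s)`. -/
noncomputable def runMax (f : ℝ → ℝ) (T t : ℝ) : ℝ :=
  sSup (f '' Set.Icc (0:ℝ) (max 0 (min t T)))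

/-!
A point `s` with `f s < M s` has a neighbourhood on which `f` stays below a level `c < M s`;
there the running maximum cannot grow, so `M` is locally constant at `s`. Hence every such
point has a neighbourhood of `μ_M`-measure zero, and a countable subcover (second countability
of `ℝ`) shows the whole set is `μ_M`-null.
-/

open Set Filter Topology

theorem measure_null_of_forall_eventually_eq (μ : Measure ℝ) (g : ℝ → ℝ)
    (hμ : ∀ a b : ℝ, a ≤ b → μ (Ioc a b) = ENNReal.ofReal (g b - g a)) {S : Set ℝ}
    (hS : ∀ s ∈ S, ∀ᶠ u in 𝓝 s, g u = g s) : μ S = 0 := by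
  refine measure_null_of_locally_null S fun s hs => ?_
  obtain ⟨l, r, hslr, hlr⟩ := mem_nhds_iff_exists_Ioo_subset.1 (hS s hs)
  obtain ⟨a, hla, has⟩ := exists_between hslr.1
  obtain ⟨b, hsb, hbr⟩ := exists_between hslr.2
  have hga : g a = g s := hlr ⟨hla, has.trans hslr.2⟩
  have hgb : g b = g s := hlr ⟨hslr.1.trans hsb, hbr⟩
  refine ⟨Ioo a b, mem_nhdsWithin_of_mem_nhds (Ioo_mem_nhds has hsb), ?_⟩
  refine measure_mono_null Ioo_subset_Ioc_self ?_
  rw [hμ a b (has.trans hsb).le, hga, hgb, sub_self, ENNReal.ofReal_zero]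

section RunningSup

variable {f : ℝ → ℝ} {x a b c : ℝ}

theorem sSup_image_Icc_mono (hf : Continuous f) (hxa : x ≤ a) (hab : a ≤ b) :
    sSup (f '' Icc x a) ≤ sSup (f '' Icc x b) :=
  csSup_le_csSup (isCompact_Icc.image hf).bddAbove ((nonempty_Icc.2 hxa).image f)
    (image_mono (Icc_subset_Icc_right hab))

theorem sSup_image_Icc_le_max (hf : Continuous f) (hxa : x ≤ a) (hab : a ≤ b)
    (hfc : ∀ u ∈ Icc a b, f u ≤ c) : sSup (f '' Icc x b) ≤ max (sSup (f '' Icc x a)) c := by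
  refine csSup_le ((nonempty_Icc.2 (hxa.trans hab)).image f) ?_
  rintro _ ⟨u, hu, rfl⟩
  rcases le_total u a with hua | hau
  · exact le_max_of_le_left
      (le_csSup (isCompact_Icc.image hf).bddAbove (mem_image_of_mem f ⟨hu.1, hua⟩))
  · exact le_max_of_le_right (hfc u ⟨hau, hu.2⟩)

theorem sSup_image_Icc_eq_of_le (hf : Continuous f) (hxa : x ≤ a) (hab : a ≤ b)
    (hfc : ∀ u ∈ Icc a b, f u ≤ c) (hcb : c < sSup (f '' Icc x b)) :
    ∀ t ∈ Icc a b, sSup (f '' Icc x t) = sSup (f '' Icc x a) := by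
  intro t ht
  have hba : sSup (f '' Icc x b) ≤ sSup (f '' Icc x a) :=
    (le_max_iff.1 (sSup_image_Icc_le_max hf hxa hab hfc)).resolve_right hcb.not_ge
  exact le_antisymm ((sSup_image_Icc_mono hf (hxa.trans ht.1) ht.2).trans hba)
    (sSup_image_Icc_mono hf hxa ht.1)

end RunningSup

theorem runMax_zero (f : ℝ → ℝ) (T : ℝ) : runMax f T 0 = f 0 := by
  simp [runMax]

theorem runMax_eventually_eq_of_lt {f : ℝ → ℝ} (hf : Continuous f) {T s : ℝ} (hs : s ∈ Icc 0 T)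
    (hlt : f s < runMax f T s) : ∀ᶠ u in 𝓝 s, runMax f T u = runMax f T s := by
  have hs0 : 0 < s := hs.1.lt_of_ne (by rintro rfl; simp [runMax_zero] at hlt)
  have hMs : runMax f T s = sSup (f '' Icc 0 s) := by
    rw [runMax, min_eq_left hs.2, max_eq_right hs.1]
  obtain ⟨c, hfc, hcM⟩ := exists_between hlt
  obtain ⟨l, r, hslr, hlr⟩ := mem_nhds_iff_exists_Ioo_subset.1
    (hf.continuousAt.eventually_lt continuousAt_const hfc)
  obtain ⟨a, hla, has⟩ := exists_between (max_lt hslr.1 hs0)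
  obtain ⟨b, hsb, hbr⟩ := exists_between hslr.2
  have ha0 : 0 ≤ a := (le_max_right l 0).trans hla.le
  have hsb' : s ≤ min b T := le_min hsb.le hs.2
  have hf_le_c : ∀ u ∈ Icc a (min b T), f u ≤ c := fun u hu =>
    (hlr ⟨(le_max_left l 0).trans_lt hla |>.trans_le hu.1,
      hu.2.trans_lt ((min_le_left b T).trans_lt hbr)⟩).le
  have hcb : c < sSup (f '' Icc 0 (min b T)) :=
    hcM.trans_le (hMs ▸ sSup_image_Icc_mono hf hs.1 hsb')
  have hconst := sSup_image_Icc_eq_of_le hf ha0 (has.le.trans hsb') hf_le_c hcb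
  filter_upwards [Ioo_mem_nhds has hsb] with u hu
  have hau : a ≤ min u T := le_min hu.1.le (has.le.trans hs.2)
  rw [hMs, hconst s ⟨has.le, hsb'⟩, runMax, max_eq_right (ha0.trans hau)]
  exact hconst _ ⟨hau, min_le_min_right T hu.2.le⟩

theorem runMax_measure_carried_on_attainment_general
    (f : ℝ → ℝ) (hf : Continuous f) (T : ℝ)
    (μM : Measure ℝ)
    (hμM : ∀ a b : ℝ, a ≤ b →
      μM (Set.Ioc a b) = ENNReal.ofReal (runMax f T b - runMax f T a)) :
    μM {s ∈ Set.Icc (0:ℝ) T | f s < runMax f T s} = 0 :=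
  measure_null_of_forall_eventually_eq μM (runMax f T) hμM fun _ hs =>
    runMax_eventually_eq_of_lt hf hs.1 hs.2

/-- The Lebesgue–Stieltjes measure `dM` of the running maximum `M` of a continuous
function `f` is carried by the set of times at which `f` attains its running
maximum: `μ_M({s ∈ [0,T] : f(s) < M(s)}) = 0`. -/
theorem runMax_measure_carried_on_attainment
    (f : ℝ → ℝ) (hf : Continuous f) (T : ℝ) (hT : 0 < T)
    (μM : Measure ℝ)
    (hμM : ∀ a b : ℝ, a ≤ b →
      μM (Set.Ioc a b) = ENNReal.ofReal (runMax f T b - runMax f T a)) :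
    μM {s ∈ Set.Icc (0:ℝ) T | f s < runMax f T s} = 0 :=
  runMax_measure_carried_on_attainment_general f hf T μM hμM
end

section
/- Let d ≥ 1 and let μ_1, …, μ_d : [0,T] → (0,1] be continuous with Σ_{i=1}^d μ_i(t) = 1 for every t ∈ [0,T]; let m_i(t) := min_{0 ≤ s ≤ t} μ_i(s). Let p > 0 and define V(t) := −log p − Σ_{i=1}^d μ_i(t) log m_i(t) + Σ_{i=1}^d m_i(t) − 1. Then for every t ∈ [0,T]: V(t) ≥ −log p − 2 − log( max_{1 ≤ j ≤ d} μ_j(0) ) + max_{1 ≤ j ≤ d} μ_j(0). In particular, if p ≤ exp( −2 − log( max_j μ_j(0) ) + max_j μ_j(0) ), then V(t) ≥ 0 for all t ∈ [0,T]. -/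
/-- The running minimum of `f` on `[0, t]`. -/
noncomputable def runMin (f : ℝ → ℝ) (t : ℝ) : ℝ :=
  sInf (f '' Set.Icc (0:ℝ) t)

/-- Example 6.3 (lower bound for the value of the entropy-with-running-minimum
strategy): `V(t) ≥ −log p − 2 − log(max_j μ_j(0)) + max_j μ_j(0)` on `[0,T]`;
in particular `V ≥ 0` if `p ≤ exp(−2 − log(max_j μ_j(0)) + max_j μ_j(0))`. -/
theorem entropy_with_running_minimum_value_lower_bound
    (T : ℝ) (hT : 0 < T)
    (d : ℕ) (hd : 1 ≤ d) (w : Fin d → ℝ → ℝ)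
    (hw_cont : ∀ i, ContinuousOn (w i) (Set.Icc (0:ℝ) T))
    (hw_mem : ∀ i, ∀ t ∈ Set.Icc (0:ℝ) T, w i t ∈ Set.Ioc (0:ℝ) 1)
    (hw_sum : ∀ t ∈ Set.Icc (0:ℝ) T, ∑ i, w i t = 1)
    (m : Fin d → ℝ → ℝ) (hm : ∀ i t, m i t = runMin (w i) t)
    (p : ℝ) (hp : 0 < p)
    (V : ℝ → ℝ)
    (hV : ∀ t, V t = -Real.log p - (∑ i, w i t * Real.log (m i t))
      + (∑ i, m i t) - 1) :
    (∀ t ∈ Set.Icc (0:ℝ) T,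
      -Real.log p - 2 - Real.log (⨆ j, w j 0) + (⨆ j, w j 0) ≤ V t) ∧
    (p ≤ Real.exp (-2 - Real.log (⨆ j, w j 0) + (⨆ j, w j 0)) →
      ∀ t ∈ Set.Icc (0:ℝ) T, 0 ≤ V t) := by
  have h0T : (0:ℝ) ∈ Set.Icc (0:ℝ) T := ⟨le_refl _, hT.le⟩
  haveI hne : Nonempty (Fin d) := ⟨⟨0, hd⟩⟩
  set M := ⨆ j, w j 0 with hMdef
  have hbdd : BddAbove (Set.range fun j => w j 0) :=
    Set.Finite.bddAbove (Set.finite_range _)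
  have hM1 : M ≤ 1 := ciSup_le fun j => (hw_mem j 0 h0T).2
  have hMpos : 0 < M :=
    lt_of_lt_of_le (hw_mem ⟨0, hd⟩ 0 h0T).1 (le_ciSup hbdd _)
  have key : ∀ t ∈ Set.Icc (0:ℝ) T,
      -Real.log p - 2 - Real.log M + M ≤ V t := by
    intro t ht
    have hsub : Set.Icc (0:ℝ) t ⊆ Set.Icc 0 T := Set.Icc_subset_Icc le_rfl ht.2
    have hmi : ∀ i, 0 < m i t ∧ m i t ≤ M := by
      intro i
      have hne' : (Set.Icc (0:ℝ) t).Nonempty := ⟨0, le_rfl, ht.1⟩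
      have hc : ContinuousOn (w i) (Set.Icc (0:ℝ) t) := (hw_cont i).mono hsub
      obtain ⟨x, hx, hxeq⟩ := isCompact_Icc.exists_sInf_image_eq hne' hc
      have h1 : m i t = w i x := by rw [hm, runMin, hxeq]
      refine ⟨h1 ▸ (hw_mem i x (hsub hx)).1, ?_⟩
      have hbb : BddBelow (w i '' Set.Icc 0 t) := by
        refine ⟨0, ?_⟩
        rintro y ⟨z, hz, rfl⟩
        exact (hw_mem i z (hsub hz)).1.le
      have h2 : m i t ≤ w i 0 := by
        rw [hm, runMin]
        exact csInf_le hbb ⟨0, ⟨le_rfl, ht.1⟩, rfl⟩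
      exact h2.trans (le_ciSup hbdd i)
    have hwi : ∀ i, 0 < w i t := fun i => (hw_mem i t ht).1
    have hsum : ∑ i, w i t = 1 := hw_sum t ht
    have hS : ∑ i, w i t * Real.log (m i t) ≤ Real.log M := by
      calc ∑ i, w i t * Real.log (m i t)
          ≤ ∑ i, w i t * Real.log M := by
            refine Finset.sum_le_sum fun i _ => ?_
            exact mul_le_mul_of_nonneg_left
              (Real.log_le_log (hmi i).1 (hmi i).2) (hwi i).le
        _ = Real.log M := by rw [← Finset.sum_mul, hsum, one_mul]
    have hmsum : 0 ≤ ∑ i, m i t := Finset.sum_nonneg fun i _ => (hmi i).1.le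
    rw [hV]
    linarith [hS, hmsum, hM1]
  refine ⟨key, fun hple t ht => ?_⟩
  have hlogp : Real.log p ≤ -2 - Real.log M + M := by
    have := Real.log_le_log hp hple
    rwa [Real.log_exp] at this
  linarith [key t ht]
end

section
/- Let d ≥ 1 and let μ_1, …, μ_d : [0,T] → (0,1] be continuous with Σ_{i=1}^d μ_i(t) = 1 for every t ∈ [0,T]; let m_i(t) := min_{0 ≤ s ≤ t} μ_i(s). Let p > 0 satisfy p ≤ exp( −2 − log( max_j μ_j(0) ) + max_j μ_j(0) ), and define V(t) := −log p − Σ_{i=1}^d μ_i(t) log m_i(t) + Σ_{i=1}^d m_i(t) − 1. Fix 0 < T* ≤ T and assume Σ_{i=1}^d μ_i(0) log μ_i(0) − max_{1 ≤ i ≤ d} log m_i(T*) > 1. Then V(t) ≥ 0 for all t ∈ [0,T], and V(t) > V(0) = −Σ_{i=1}^d μ_i(0) log( p μ_i(0) ) for every t ∈ [T*, T]. (Example 6.3: the strategy additively generated by the entropy functional with running minimum is strong arbitrage relative to the market over every horizon [0,t] with T* ≤ t ≤ T, even though its Gamma functional is nonincreasing.) -/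
open Set

theorem Finset.sum_mul_le_of_sum_eq_one {ι : Type*} [Fintype ι] {w x : ι → ℝ} {c : ℝ}
    (hw : ∀ i, 0 ≤ w i) (hsum : ∑ i, w i = 1) (hx : ∀ i, x i ≤ c) :
    ∑ i, w i * x i ≤ c :=
  calc ∑ i, w i * x i ≤ ∑ i, w i * c :=
        Finset.sum_le_sum fun i _ => mul_le_mul_of_nonneg_left (hx i) (hw i)
    _ = c := by rw [← Finset.sum_mul, hsum, one_mul]

theorem Finset.sum_mul_log_mul {ι : Type*} [Fintype ι] {w : ι → ℝ} {p : ℝ} (hp : p ≠ 0)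
    (hw : ∀ i, w i ≠ 0) (hsum : ∑ i, w i = 1) :
    ∑ i, w i * Real.log (p * w i) = Real.log p + ∑ i, w i * Real.log (w i) := by
  simp only [Real.log_mul hp (hw _), mul_add, Finset.sum_add_distrib, ← Finset.sum_mul, hsum,
    one_mul]

section RunningMinimum

@[simp]
theorem runMin_zero (f : ℝ → ℝ) : runMin f 0 = f 0 := by
  rw [runMin, Icc_self, image_singleton, csInf_singleton]

variable {f : ℝ → ℝ} {T : ℝ}

theorem isCompact_image_Icc_zero (hf : ContinuousOn f (Icc 0 T)) {t : ℝ} (ht : t ≤ T) :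
    IsCompact (f '' Icc 0 t) :=
  isCompact_Icc.image_of_continuousOn (hf.mono (Icc_subset_Icc_right ht))

theorem runMin_le_of_mem (hf : ContinuousOn f (Icc 0 T)) {s t : ℝ} (ht : t ≤ T)
    (hs : s ∈ Icc 0 t) : runMin f t ≤ f s :=
  csInf_le (isCompact_image_Icc_zero hf ht).bddBelow (mem_image_of_mem f hs)

theorem exists_eq_runMin (hf : ContinuousOn f (Icc 0 T)) {t : ℝ} (ht : t ∈ Icc 0 T) :
    ∃ s ∈ Icc 0 t, f s = runMin f t :=
  (isCompact_image_Icc_zero hf ht.2).sInf_mem ((nonempty_Icc.2 ht.1).image f)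

theorem runMin_mem_of_mapsTo {A : Set ℝ} (hf : ContinuousOn f (Icc 0 T))
    (hA : MapsTo f (Icc 0 T) A) {t : ℝ} (ht : t ∈ Icc 0 T) : runMin f t ∈ A := by
  obtain ⟨s, hs, hfs⟩ := exists_eq_runMin hf ht
  exact hfs ▸ hA ⟨hs.1, hs.2.trans ht.2⟩

theorem runMin_antitoneOn (hf : ContinuousOn f (Icc 0 T)) : AntitoneOn (runMin f) (Icc 0 T) :=
  fun _ hs _ ht hst =>
    csInf_le_csInf (isCompact_image_Icc_zero hf ht.2).bddBelow ((nonempty_Icc.2 hs.1).image f)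
      (image_mono (Icc_subset_Icc_right hst))

end RunningMinimum

noncomputable def entropyRunMinValue {ι : Type*} [Fintype ι] (p : ℝ) (w : ι → ℝ → ℝ)
    (t : ℝ) : ℝ :=
  -Real.log p - ∑ i, w i t * Real.log (runMin (w i) t) + ∑ i, runMin (w i) t - 1

section EntropyRunMin

variable {ι : Type*} {T : ℝ} {w : ι → ℝ → ℝ}

theorem runMin_pos (hw_cont : ∀ i, ContinuousOn (w i) (Icc 0 T))
    (hw_mem : ∀ i, ∀ t ∈ Icc 0 T, w i t ∈ Ioc 0 1) (i : ι) {t : ℝ} (ht : t ∈ Icc 0 T) :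
    0 < runMin (w i) t :=
  (runMin_mem_of_mapsTo (hw_cont i) (hw_mem i) ht).1

theorem sum_mul_log_runMin_le_log_iSup [Fintype ι] (hw_cont : ∀ i, ContinuousOn (w i) (Icc 0 T))
    (hw_mem : ∀ i, ∀ t ∈ Icc 0 T, w i t ∈ Ioc 0 1) (hw_sum : ∀ t ∈ Icc 0 T, ∑ i, w i t = 1)
    {t : ℝ} (ht : t ∈ Icc 0 T) :
    ∑ i, w i t * Real.log (runMin (w i) t) ≤ Real.log (⨆ j, w j 0) :=
  Finset.sum_mul_le_of_sum_eq_one (fun i => (hw_mem i t ht).1.le) (hw_sum t ht) fun i =>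
    Real.log_le_log (runMin_pos hw_cont hw_mem i ht)
      ((runMin_le_of_mem (hw_cont i) ht.2 ⟨le_rfl, ht.1⟩).trans
        (le_ciSup (Finite.bddAbove_range fun j => w j 0) i))

theorem sum_mul_log_runMin_le_iSup_log [Fintype ι] (hw_cont : ∀ i, ContinuousOn (w i) (Icc 0 T))
    (hw_mem : ∀ i, ∀ t ∈ Icc 0 T, w i t ∈ Ioc 0 1) (hw_sum : ∀ t ∈ Icc 0 T, ∑ i, w i t = 1)
    {Tstar t : ℝ} (hTstar : 0 ≤ Tstar) (ht : t ∈ Icc Tstar T) :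
    ∑ i, w i t * Real.log (runMin (w i) t) ≤ ⨆ i, Real.log (runMin (w i) Tstar) := by
  have htT : t ∈ Icc 0 T := ⟨hTstar.trans ht.1, ht.2⟩
  refine Finset.sum_mul_le_of_sum_eq_one (fun i => (hw_mem i t htT).1.le) (hw_sum t htT)
    fun i => ?_
  calc Real.log (runMin (w i) t) ≤ Real.log (runMin (w i) Tstar) :=
        Real.log_le_log (runMin_pos hw_cont hw_mem i htT)
          (runMin_antitoneOn (hw_cont i) ⟨hTstar, ht.1.trans ht.2⟩ htT ht.1)
    _ ≤ ⨆ i, Real.log (runMin (w i) Tstar) :=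
        le_ciSup (Finite.bddAbove_range fun j => Real.log (runMin (w j) Tstar)) i

theorem entropyRunMinValue_zero_eq [Fintype ι] (p : ℝ) (hsum0 : ∑ i, w i 0 = 1) :
    entropyRunMinValue p w 0 = -Real.log p - ∑ i, w i 0 * Real.log (w i 0) := by
  simp only [entropyRunMinValue, runMin_zero, hsum0]
  ring

theorem entropyRunMinValue_nonneg [Fintype ι] (hw_cont : ∀ i, ContinuousOn (w i) (Icc 0 T))
    (hw_mem : ∀ i, ∀ t ∈ Icc 0 T, w i t ∈ Ioc 0 1) (hw_sum : ∀ t ∈ Icc 0 T, ∑ i, w i t = 1)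
    {p : ℝ} (hp_pos : 0 < p) (hp : p ≤ Real.exp (-2 - Real.log (⨆ j, w j 0) + (⨆ j, w j 0)))
    {t : ℝ} (ht : t ∈ Icc 0 T) : 0 ≤ entropyRunMinValue p w t := by
  have h0 : (0 : ℝ) ∈ Icc 0 T := ⟨le_rfl, ht.1.trans ht.2⟩
  have hS : ⨆ j, w j 0 ≤ 1 := Real.iSup_le (fun j => (hw_mem j 0 h0).2) zero_le_one
  have hlog_p := (Real.log_le_iff_le_exp hp_pos).2 hp
  have hG := sum_mul_log_runMin_le_log_iSup hw_cont hw_mem hw_sum ht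
  have hΓ : 0 ≤ ∑ i, runMin (w i) t :=
    Finset.sum_nonneg fun i _ => (runMin_pos hw_cont hw_mem i ht).le
  rw [entropyRunMinValue]
  linarith

theorem entropyRunMinValue_zero_lt [Fintype ι] (hw_cont : ∀ i, ContinuousOn (w i) (Icc 0 T))
    (hw_mem : ∀ i, ∀ t ∈ Icc 0 T, w i t ∈ Ioc 0 1) (hw_sum : ∀ t ∈ Icc 0 T, ∑ i, w i t = 1)
    (p : ℝ) {Tstar t : ℝ} (hTstar : 0 ≤ Tstar) (ht : t ∈ Icc Tstar T)
    (harb : ∑ i, w i 0 * Real.log (w i 0) - ⨆ i, Real.log (runMin (w i) Tstar) > 1) :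
    entropyRunMinValue p w 0 < entropyRunMinValue p w t := by
  have h0 : (0 : ℝ) ∈ Icc 0 T := ⟨le_rfl, hTstar.trans (ht.1.trans ht.2)⟩
  have htT : t ∈ Icc 0 T := ⟨hTstar.trans ht.1, ht.2⟩
  have hG := sum_mul_log_runMin_le_iSup_log hw_cont hw_mem hw_sum hTstar ht
  have hΓ : 0 ≤ ∑ i, runMin (w i) t :=
    Finset.sum_nonneg fun i _ => (runMin_pos hw_cont hw_mem i htT).le
  rw [entropyRunMinValue_zero_eq p (hw_sum 0 h0), entropyRunMinValue]
  linarith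

end EntropyRunMin

theorem entropy_with_running_minimum_arbitrage_general
    (T Tstar : ℝ) (hTstar : 0 < Tstar) (hTstarT : Tstar ≤ T)
    (d : ℕ) (w : Fin d → ℝ → ℝ)
    (hw_cont : ∀ i, ContinuousOn (w i) (Set.Icc (0:ℝ) T))
    (hw_mem : ∀ i, ∀ t ∈ Set.Icc (0:ℝ) T, w i t ∈ Set.Ioc (0:ℝ) 1)
    (hw_sum : ∀ t ∈ Set.Icc (0:ℝ) T, ∑ i, w i t = 1)
    (m : Fin d → ℝ → ℝ) (hm : ∀ i t, m i t = runMin (w i) t)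
    (p : ℝ) (hp_pos : 0 < p)
    (hp : p ≤ Real.exp (-2 - Real.log (⨆ j, w j 0) + (⨆ j, w j 0)))
    (V : ℝ → ℝ)
    (hV : ∀ t, V t = -Real.log p - (∑ i, w i t * Real.log (m i t))
      + (∑ i, m i t) - 1)
    (harb : (∑ i, w i 0 * Real.log (w i 0)) - (⨆ i, Real.log (m i Tstar)) > 1) :
    (∀ t ∈ Set.Icc (0:ℝ) T, 0 ≤ V t) ∧
      V 0 = -∑ i, w i 0 * Real.log (p * w i 0) ∧
      ∀ t ∈ Set.Icc Tstar T, V 0 < V t := by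
  have h0 : (0 : ℝ) ∈ Icc 0 T := ⟨le_rfl, hTstar.le.trans hTstarT⟩
  have hw0 : ∀ i, w i 0 ≠ 0 := fun i => (hw_mem i 0 h0).1.ne'
  obtain rfl : m = fun i t => runMin (w i) t := funext fun i => funext (hm i)
  obtain rfl : V = entropyRunMinValue p w := funext hV
  refine ⟨fun t ht => entropyRunMinValue_nonneg hw_cont hw_mem hw_sum hp_pos hp ht, ?_,
    fun t ht => entropyRunMinValue_zero_lt hw_cont hw_mem hw_sum p hTstar.le ht harb⟩
  rw [entropyRunMinValue_zero_eq p (hw_sum 0 h0),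
    Finset.sum_mul_log_mul hp_pos.ne' hw0 (hw_sum 0 h0)]
  ring

/-- Example 6.3: the strategy additively generated by the entropy functional
with running minimum, `G(t, μ, μ_*) = −log p − Σ_i μ_i(t) log μ_{*i}(t)`, with
value process `V = G + Γ^G` where `Γ^G(t) = Σ_i μ_{*i}(t) − 1`, is strong
arbitrage relative to the market over every horizon `[0,t]` with `T* ≤ t ≤ T`,
even though its Gamma functional is nonincreasing. -/
theorem entropy_with_running_minimum_arbitrage
    (T Tstar : ℝ) (hTstar : 0 < Tstar) (hTstarT : Tstar ≤ T)
    (d : ℕ) (hd : 1 ≤ d) (w : Fin d → ℝ → ℝ)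
    (hw_cont : ∀ i, ContinuousOn (w i) (Set.Icc (0:ℝ) T))
    (hw_mem : ∀ i, ∀ t ∈ Set.Icc (0:ℝ) T, w i t ∈ Set.Ioc (0:ℝ) 1)
    (hw_sum : ∀ t ∈ Set.Icc (0:ℝ) T, ∑ i, w i t = 1)
    (m : Fin d → ℝ → ℝ) (hm : ∀ i t, m i t = runMin (w i) t)
    (p : ℝ) (hp_pos : 0 < p)
    (hp : p ≤ Real.exp (-2 - Real.log (⨆ j, w j 0) + (⨆ j, w j 0)))
    (V : ℝ → ℝ)
    (hV : ∀ t, V t = -Real.log p - (∑ i, w i t * Real.log (m i t))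
      + (∑ i, m i t) - 1)
    (harb : (∑ i, w i 0 * Real.log (w i 0)) - (⨆ i, Real.log (m i Tstar)) > 1) :
    (∀ t ∈ Set.Icc (0:ℝ) T, 0 ≤ V t) ∧
      V 0 = -∑ i, w i 0 * Real.log (p * w i 0) ∧
      ∀ t ∈ Set.Icc Tstar T, V 0 < V t :=
  entropy_with_running_minimum_arbitrage_general T Tstar hTstar hTstarT d w hw_cont hw_mem hw_sum m
    hm p hp_pos hp V hV harb
end

section
/- Let r > 0, d ≥ 1, and let μ_1, …, μ_d : [0,T] → (0,1] be continuous with Σ_{i=1}^d μ_i(t) = 1 for all t ∈ [0,T] and μ_i(0) ≤ 1/(r e) for every i; let m_i(t) := min_{0 ≤ s ≤ t} μ_i(s). With li_r(x) := ∫_0^x du/log(ru), set κ := −1 − Σ_i li_r(μ_i(0)), p := −log( max_{1 ≤ i ≤ d} { −r μ_i(0) log(r μ_i(0)) } ) + κ, Γ(t) := Σ_{i=1}^d ( m_i(t) − μ_i(0) + li_r(m_i(t)) − li_r(μ_i(0)) ), φ_i(t) := −p − log( −r m_i(t) log(r m_i(t)) ) + Γ(t), and V(t) := −p − Σ_{i=1}^d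 μ_i(t) log( −r m_i(t) log(r m_i(t)) ) + Γ(t). Then φ_i(t) ≥ 0 for every i = 1, …, d and every t ∈ [0,T] (the strategy is long-only), and V(t) ≥ 0 for every t ∈ [0,T]. -/
/-- `li_r(x) := ∫_0^x du / log(ru)`. -/
noncomputable def lir (r x : ℝ) : ℝ :=
  ∫ u in (0:ℝ)..x, (Real.log (r * u))⁻¹

/-!
Write `A_i(t) = -r m_i(t) log (r m_i(t))` and `S = max_j A_j(0)`; the choice of `p` makes
`φ_i(t) = (log S - log A_i(t)) + (Γ(t) - κ)`. Since `m_i(t) ≤ μ_i(0) ≤ 1/(re)` and `x ↦ -x log x`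
increases on `[0, 1/e]`, `A_i(t) ≤ A_i(0) ≤ S`. Moreover `Γ(t) - κ = ∑_j (m_j(t) + li_r(m_j(t)))`,
which is nonnegative because the integrand `1 / log (r u)` of `li_r` lies in `[-1, 0]`.
Finally `∑_i μ_i = 1` gives `V = ∑_i μ_i φ_i ≥ 0`.
-/

open Real Set
open scoped Interval

namespace Real

lemma negMulLog_pos {x : ℝ} (h0 : 0 < x) (h1 : x < 1) : 0 < negMulLog x :=
  mul_pos_of_neg_of_neg (neg_lt_zero.2 h0) (log_neg h0 h1)

lemma negMulLog_monotoneOn : MonotoneOn negMulLog (Icc 0 (exp (-1))) := fun x hx y hy hxy => by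
  simpa [negMulLog_eq_neg] using mul_log_strictAntiOn.antitoneOn hx hy hxy

lemma log_negMulLog_le_log {x y c : ℝ} (hx : 0 < x) (hxy : x ≤ y) (hy : y ≤ exp (-1))
    (hyc : negMulLog y ≤ c) : log (negMulLog x) ≤ log c :=
  log_le_log (negMulLog_pos hx ((hxy.trans hy).trans_lt (exp_lt_one_iff.2 (by norm_num))))
    ((negMulLog_monotoneOn ⟨hx.le, hxy.trans hy⟩ ⟨hx.le.trans hxy, hy⟩ hxy).trans hyc)

lemma abs_inv_log_le_one {y : ℝ} (hy : 0 < y) (hye : y ≤ exp (-1)) : |(log y)⁻¹| ≤ 1 := by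
  have hlog : log y ≤ -1 := (log_le_iff_le_exp hy).2 hye
  rw [abs_inv, abs_of_neg (by linarith)]
  exact inv_le_one_of_one_le₀ (by linarith)

end Real

lemma abs_lir_le {r x : ℝ} (hr : 0 < r) (hx : 0 ≤ x) (hrx : r * x ≤ exp (-1)) :
    |lir r x| ≤ x := by
  have hbound : ∀ u ∈ Ι 0 x, ‖(log (r * u))⁻¹‖ ≤ 1 := by
    rw [uIoc_of_le hx]
    exact fun u hu => abs_inv_log_le_one (mul_pos hr hu.1)
      ((mul_le_mul_of_nonneg_left hu.2 hr.le).trans hrx)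
  simpa [lir, abs_of_nonneg hx] using intervalIntegral.norm_integral_le_of_norm_le_const hbound

lemma neg_le_lir {r x : ℝ} (hr : 0 < r) (hx : 0 ≤ x) (hrx : r * x ≤ exp (-1)) : -x ≤ lir r x :=
  (abs_le.1 (abs_lir_le hr hx hrx)).1

section runMin

variable {f : ℝ → ℝ} {t : ℝ}

lemma runMin_mem_image (hf : ContinuousOn f (Icc 0 t)) (ht : 0 ≤ t) :
    runMin f t ∈ f '' Icc 0 t :=
  (isCompact_Icc.image_of_continuousOn hf).sInf_mem ((nonempty_Icc.2 ht).image f)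

lemma runMin_le (hf : ContinuousOn f (Icc 0 t)) {s : ℝ} (hs : s ∈ Icc 0 t) : runMin f t ≤ f s :=
  csInf_le (isCompact_Icc.image_of_continuousOn hf).bddBelow (mem_image_of_mem f hs)

lemma runMin_mem_Ioc {T : ℝ} (hf : ContinuousOn f (Icc 0 T)) (hpos : ∀ s ∈ Icc 0 T, 0 < f s)
    (ht : t ∈ Icc 0 T) : runMin f t ∈ Ioc 0 (f 0) := by
  have hft : ContinuousOn f (Icc 0 t) := hf.mono (Icc_subset_Icc_right ht.2)
  obtain ⟨s, hs, hs_eq⟩ := runMin_mem_image hft ht.1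
  exact ⟨hs_eq ▸ hpos s ⟨hs.1, hs.2.trans ht.2⟩, runMin_le hft ⟨le_rfl, ht.1⟩⟩

end runMin

lemma mul_le_exp_neg_one_of_le_one_div {r x : ℝ} (hr : 0 < r) (hx : x ≤ 1 / (r * exp 1)) :
    r * x ≤ exp (-1) := by
  rw [exp_neg, ← one_div]
  calc r * x ≤ r * (1 / (r * exp 1)) := mul_le_mul_of_nonneg_left hx hr.le
    _ = 1 / exp 1 := by field_simp

theorem iterated_entropy_long_only_and_nonnegative_value_general
    (r T : ℝ) (hr : 0 < r)
    (d : ℕ) (w : Fin d → ℝ → ℝ)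
    (hw_cont : ∀ i, ContinuousOn (w i) (Set.Icc (0:ℝ) T))
    (hw_mem : ∀ i, ∀ t ∈ Set.Icc (0:ℝ) T, w i t ∈ Set.Ioc (0:ℝ) 1)
    (hw_sum : ∀ t ∈ Set.Icc (0:ℝ) T, ∑ i, w i t = 1)
    (hw_init : ∀ i, w i 0 ≤ 1 / (r * Real.exp 1))
    (m : Fin d → ℝ → ℝ) (hm : ∀ i t, m i t = runMin (w i) t)
    (κ : ℝ) (hκ : κ = -1 - ∑ i, lir r (w i 0))
    (p : ℝ)
    (hp : p = -Real.log (⨆ i, (-(r * w i 0) * Real.log (r * w i 0))) + κ)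
    (Γ : ℝ → ℝ)
    (hΓ : ∀ t, Γ t = ∑ i, (m i t - w i 0 + lir r (m i t) - lir r (w i 0)))
    (φ : Fin d → ℝ → ℝ)
    (hφ : ∀ i t, φ i t
      = -p - Real.log (-(r * m i t) * Real.log (r * m i t)) + Γ t)
    (V : ℝ → ℝ)
    (hV : ∀ t, V t
      = -p - (∑ i, w i t * Real.log (-(r * m i t) * Real.log (r * m i t))) + Γ t) :
    (∀ i, ∀ t ∈ Set.Icc (0:ℝ) T, 0 ≤ φ i t) ∧
      ∀ t ∈ Set.Icc (0:ℝ) T, 0 ≤ V t := by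
  have hrw : ∀ i, r * w i 0 ≤ exp (-1) := fun i =>
    mul_le_exp_neg_one_of_le_one_div hr (hw_init i)
  have hm_mem : ∀ i, ∀ t ∈ Icc 0 T, m i t ∈ Ioc 0 (w i 0) := fun i t ht =>
    hm i t ▸ runMin_mem_Ioc (hw_cont i) (fun s hs => (hw_mem i s hs).1) ht
  have hφ_nonneg : ∀ i, ∀ t ∈ Icc 0 T, 0 ≤ φ i t := by
    intro i t ht
    have hrm : ∀ j, 0 < r * m j t ∧ r * m j t ≤ r * w j 0 := fun j =>
      ⟨mul_pos hr (hm_mem j t ht).1, mul_le_mul_of_nonneg_left (hm_mem j t ht).2 hr.le⟩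
    have hA_le_S : log (negMulLog (r * m i t)) ≤ log (⨆ j, negMulLog (r * w j 0)) :=
      log_negMulLog_le_log (hrm i).1 (hrm i).2 (hrw i)
        (le_ciSup (f := fun j => negMulLog (r * w j 0)) (Set.finite_range _).bddAbove i)
    have hΓκ : Γ t - κ = ∑ j, (m j t + lir r (m j t)) := by
      rw [hΓ, hκ]
      simp only [Finset.sum_sub_distrib, Finset.sum_add_distrib, hw_sum 0 ⟨le_rfl, ht.1.trans ht.2⟩]
      ring
    have hΓκ_nonneg : 0 ≤ Γ t - κ := hΓκ ▸ Finset.sum_nonneg fun j _ => by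
      linarith [neg_le_lir hr (hm_mem j t ht).1.le (((hrm j).2).trans (hrw j))]
    simp only [negMulLog] at hA_le_S
    rw [hφ, hp]
    linarith
  refine ⟨hφ_nonneg, fun t ht => ?_⟩
  have hV_eq : V t = ∑ i, w i t * φ i t := by
    simp only [hV, hφ, mul_add, mul_sub, Finset.sum_add_distrib, Finset.sum_sub_distrib,
      ← Finset.sum_mul, hw_sum t ht]
    ring
  exact hV_eq ▸ Finset.sum_nonneg fun i _ => mul_nonneg (hw_mem i t ht).1.le (hφ_nonneg i t ht)

/-- Example 6.4 (iterated entropy with running minimum): with the specific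
choice of the constant `p`, the additively generated strategy `φ` is long-only
(`φ_i ≥ 0`) and its value process `V` is nonnegative on `[0, T]`. -/
theorem iterated_entropy_long_only_and_nonnegative_value
    (r T : ℝ) (hr : 0 < r) (hT : 0 < T)
    (d : ℕ) (hd : 1 ≤ d) (w : Fin d → ℝ → ℝ)
    (hw_cont : ∀ i, ContinuousOn (w i) (Set.Icc (0:ℝ) T))
    (hw_mem : ∀ i, ∀ t ∈ Set.Icc (0:ℝ) T, w i t ∈ Set.Ioc (0:ℝ) 1)
    (hw_sum : ∀ t ∈ Set.Icc (0:ℝ) T, ∑ i, w i t = 1)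
    (hw_init : ∀ i, w i 0 ≤ 1 / (r * Real.exp 1))
    (m : Fin d → ℝ → ℝ) (hm : ∀ i t, m i t = runMin (w i) t)
    (κ : ℝ) (hκ : κ = -1 - ∑ i, lir r (w i 0))
    (p : ℝ)
    (hp : p = -Real.log (⨆ i, (-(r * w i 0) * Real.log (r * w i 0))) + κ)
    (Γ : ℝ → ℝ)
    (hΓ : ∀ t, Γ t = ∑ i, (m i t - w i 0 + lir r (m i t) - lir r (w i 0)))
    (φ : Fin d → ℝ → ℝ)
    (hφ : ∀ i t, φ i t
      = -p - Real.log (-(r * m i t) * Real.log (r * m i t)) + Γ t)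
    (V : ℝ → ℝ)
    (hV : ∀ t, V t
      = -p - (∑ i, w i t * Real.log (-(r * m i t) * Real.log (r * m i t))) + Γ t) :
    (∀ i, ∀ t ∈ Set.Icc (0:ℝ) T, 0 ≤ φ i t) ∧
      ∀ t ∈ Set.Icc (0:ℝ) T, 0 ≤ V t :=
  iterated_entropy_long_only_and_nonnegative_value_general r T hr d w hw_cont hw_mem hw_sum hw_init
    m hm κ hκ p hp Γ hΓ φ hφ V hV
end
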